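/- arXiv:2002.03657 — 2 statements merged into one kernel-verified Lean document; each statement's English description precedes it below -/
import Mathlib

section
/- Let A be a real p×n matrix, b ∈ ℝᵖ, c ∈ ℝᵖ, and define the one-hidden-layer ReLU network output F : ℝⁿ → ℝ by F(x) = Σⱼ cⱼ · ReLU((A x + b)ⱼ). Let g : ℝ → ℝ be any selection of G, i.e., g(s) = 1 for s > 0, g(s) = 0 for s < 0, g(0) ∈ {0,1}. Then for all x, y ∈ ℝⁿ, F(y) - F(x) = ∫₀¹ Σⱼ cⱼ · g((A(x + t(y - x)) + b)ⱼ) · (A(y - x))ⱼ dt; equivalently, F(y) - F(x) = ∫₀¹ ⟨y - x, Aᵀ diag(u(t)) c⟩ dt where u(t)ⱼ = g((A(x + t(y-x)) + b)ⱼ). -/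
open Matrix MeasureTheory

/-- The ReLU function. -/
noncomputable def ReLU (x : ℝ) : ℝ := max 0 x

/-- The generalized derivative of ReLU: `G(x) = {1}` for `x > 0`, `{0}` for `x < 0`,
and `{0, 1}` for `x = 0`. -/
noncomputable def G (x : ℝ) : Set ℝ :=
  if 0 < x then {1} else if x < 0 then {0} else {0, 1}

noncomputable def gsel (u : ℝ) : ℝ := if 0 < u then 1 else 0

lemma ae_ne_zero : ∀ᵐ u : ℝ, u ≠ 0 := by
  refine ae_iff.mpr ?_
  simpa using MeasureTheory.measure_singleton (0:ℝ)

lemma gsel_meas : Measurable gsel := by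
  unfold gsel
  exact Measurable.ite (measurableSet_lt measurable_const measurable_id) measurable_const measurable_const

lemma gsel_intInt (a b : ℝ) : IntervalIntegrable gsel volume a b := by
  refine IntervalIntegrable.mono_fun (intervalIntegrable_const (c := (1:ℝ)))
    (gsel_meas.aestronglyMeasurable) ?_
  filter_upwards [] with u
  unfold gsel
  split <;> simp

lemma g_eq_gsel {g : ℝ → ℝ} (hg : ∀ s, g s ∈ G s) {u : ℝ} (hu : u ≠ 0) :
    g u = gsel u := by
  have h := hg u
  unfold G at h
  unfold gsel
  rcases lt_trichotomy u 0 with hlt | heq | hgt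
  · rw [if_neg (not_lt.mpr hlt.le), if_pos hlt] at h
    rw [if_neg (not_lt.mpr hlt.le)]
    exact h
  · exact absurd heq hu
  · rw [if_pos hgt] at h
    rw [if_pos hgt]
    exact h

lemma integral_gsel_neg {s e : ℝ} (hse : s ≤ e) (he : e ≤ 0) :
    ∫ u in s..e, gsel u = ReLU e - ReLU s := by
  have : ∫ u in s..e, gsel u = ∫ u in s..e, (0:ℝ) := by
    apply intervalIntegral.integral_congr_ae
    filter_upwards [ae_ne_zero] with u hu hmem
    rw [Set.uIoc_of_le hse] at hmem
    unfold gsel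
    rw [if_neg (not_lt.mpr (hmem.2.trans he))]
  rw [this]
  simp [ReLU, max_eq_left he, max_eq_left (hse.trans he)]

lemma integral_gsel_pos {s e : ℝ} (hse : s ≤ e) (hs : 0 ≤ s) :
    ∫ u in s..e, gsel u = ReLU e - ReLU s := by
  have : ∫ u in s..e, gsel u = ∫ u in s..e, (1:ℝ) := by
    apply intervalIntegral.integral_congr_ae
    filter_upwards [] with u hmem
    rw [Set.uIoc_of_le hse] at hmem
    unfold gsel
    rw [if_pos (lt_of_le_of_lt hs hmem.1)]
  rw [this]
  simp [ReLU, max_eq_right (hs.trans hse), max_eq_right hs]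

lemma integral_gsel_le {s e : ℝ} (hse : s ≤ e) :
    ∫ u in s..e, gsel u = ReLU e - ReLU s := by
  rcases le_or_gt e 0 with he | he
  · exact integral_gsel_neg hse he
  · rcases le_or_gt 0 s with hs | hs
    · exact integral_gsel_pos hse hs
    · have hsplit : (∫ u in s..(0:ℝ), gsel u) + ∫ u in (0:ℝ)..e, gsel u
          = ∫ u in s..e, gsel u :=
        intervalIntegral.integral_add_adjacent_intervals (gsel_intInt s 0) (gsel_intInt 0 e)
      rw [← hsplit, integral_gsel_neg hs.le le_rfl, integral_gsel_pos he.le le_rfl]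
      ring

lemma integral_gsel (s e : ℝ) :
    ∫ u in s..e, gsel u = ReLU e - ReLU s := by
  rcases le_total s e with h | h
  · exact integral_gsel_le h
  · rw [intervalIntegral.integral_symm, integral_gsel_le h]
    ring

lemma integral_g {g : ℝ → ℝ} (hg : ∀ s, g s ∈ G s) (s e : ℝ) :
    ∫ u in s..e, g u = ReLU e - ReLU s := by
  rw [← integral_gsel s e]
  apply intervalIntegral.integral_congr_ae
  filter_upwards [ae_ne_zero] with u hu _
  exact g_eq_gsel hg hu

lemma key {g : ℝ → ℝ} (hg : ∀ s, g s ∈ G s) (a s : ℝ) :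
    ∫ t in (0:ℝ)..1, g (a * t + s) * a = ReLU (a + s) - ReLU s := by
  rcases eq_or_ne a 0 with rfl | ha
  · simp
  · rw [intervalIntegral.integral_mul_const,
      intervalIntegral.integral_comp_mul_add g ha s]
    simp only [mul_zero, zero_add, mul_one, smul_eq_mul]
    rw [integral_g hg]
    field_simp

lemma g_meas {g : ℝ → ℝ} (hg : ∀ s, g s ∈ G s) : Measurable g := by
  have : g = fun u => if u = 0 then g 0 else gsel u := by
    funext u
    by_cases h : u = 0
    · simp [h]
    · simp [h, g_eq_gsel hg h]
  rw [this]
  exact Measurable.ite (MeasurableSet.singleton 0) measurable_const gsel_meas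

lemma g_bound {g : ℝ → ℝ} (hg : ∀ s, g s ∈ G s) (u : ℝ) : |g u| ≤ 1 := by
  have h := hg u
  unfold G at h
  split_ifs at h <;> simp_all <;> rcases h with h | h <;> simp [h]

lemma dot_eq {n p : ℕ} (A : Matrix (Fin p) (Fin n) ℝ) (u c : Fin p → ℝ) (v : Fin n → ℝ) :
    ∑ i, v i * ((Aᵀ * Matrix.diagonal u).mulVec c) i
      = ∑ j, c j * u j * (A.mulVec v) j := by
  simp only [Matrix.mulVec, dotProduct, Matrix.mul_diagonal, Matrix.transpose_apply,
    Finset.mul_sum]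
  rw [Finset.sum_comm]
  exact Finset.sum_congr rfl fun j _ => Finset.sum_congr rfl fun i _ => by ring

/-- For a one-hidden-layer ReLU network `F(x) = Σⱼ cⱼ ReLU((Ax+b)ⱼ)` and any
selection `g` of `G`, the fundamental theorem of calculus holds along every
segment:
`F(y) - F(x) = ∫₀¹ Σⱼ cⱼ g((A(x+t(y-x))+b)ⱼ) (A(y-x))ⱼ dt`, and equivalently
`F(y) - F(x) = ∫₀¹ ⟨y - x, Aᵀ diag(u(t)) c⟩ dt` with
`u(t)ⱼ = g((A(x+t(y-x))+b)ⱼ)`. -/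
theorem one_layer_conservative_segment (n p : ℕ)
    (A : Matrix (Fin p) (Fin n) ℝ) (b c : Fin p → ℝ)
    (F : (Fin n → ℝ) → ℝ)
    (hF : ∀ x, F x = ∑ j, c j * ReLU ((A.mulVec x + b) j))
    (g : ℝ → ℝ) (hg : ∀ s, g s ∈ G s) (x y : Fin n → ℝ) :
    F y - F x
      = ∫ t in (0:ℝ)..1,
          ∑ j, c j * g ((A.mulVec (x + t • (y - x)) + b) j) * (A.mulVec (y - x)) j
    ∧ F y - F x
      = ∫ t in (0:ℝ)..1,
          ∑ i, (y - x) i *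
            ((Aᵀ * Matrix.diagonal (fun j => g ((A.mulVec (x + t • (y - x)) + b) j))).mulVec c) i := by
  set a : Fin p → ℝ := A.mulVec (y - x) with ha
  set s : Fin p → ℝ := fun j => (A.mulVec x + b) j with hs
  have harg : ∀ (t : ℝ) (j : Fin p),
      (A.mulVec (x + t • (y - x)) + b) j = a j * t + s j := by
    intro t j
    simp [ha, hs, Matrix.mulVec_add, Matrix.mulVec_smul, smul_eq_mul]
    ring
  have hy : ∀ j, (A.mulVec y + b) j = a j + s j := by
    intro j
    have h : A.mulVec y = A.mulVec x + a := by
      rw [ha, ← Matrix.mulVec_add, add_sub_cancel]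
    simp [h, hs]
    ring
  have hint : ∀ j : Fin p,
      IntervalIntegrable (fun t => c j * g (a j * t + s j) * a j) volume 0 1 := by
    intro j
    refine IntervalIntegrable.mono_fun
      (intervalIntegrable_const (c := |c j| * |a j|))
      (((g_meas hg).comp ((measurable_id.const_mul (a j)).add_const (s j))).const_mul (c j) |>.mul_const (a j)
        |>.aestronglyMeasurable) ?_
    filter_upwards [] with t
    simp only [Real.norm_eq_abs, abs_mul, abs_abs]
    calc |c j| * |g (a j * t + s j)| * |a j|
        ≤ |c j| * 1 * |a j| := by
          gcongr
          exact g_bound hg _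
      _ = |c j| * |a j| := by ring
  have h1 : F y - F x
      = ∫ t in (0:ℝ)..1, ∑ j, c j * g ((A.mulVec (x + t • (y - x)) + b) j) * a j := by
    have : ∫ t in (0:ℝ)..1, ∑ j, c j * g ((A.mulVec (x + t • (y - x)) + b) j) * a j
        = ∑ j, ∫ t in (0:ℝ)..1, c j * g (a j * t + s j) * a j := by
      rw [← intervalIntegral.integral_finset_sum (fun j _ => hint j)]
      apply intervalIntegral.integral_congr
      intro t _
      exact Finset.sum_congr rfl fun j _ => by rw [harg]
    rw [this, hF, hF]
    rw [← Finset.sum_sub_distrib]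
    refine Finset.sum_congr rfl fun j _ => ?_
    have : ∫ t in (0:ℝ)..1, c j * g (a j * t + s j) * a j
        = c j * ∫ t in (0:ℝ)..1, g (a j * t + s j) * a j := by
      rw [← intervalIntegral.integral_const_mul]
      congr 1
      funext t
      ring
    rw [this, key hg (a j) (s j), hy j]
    ring
  constructor
  · exact h1
  · rw [h1]
    apply intervalIntegral.integral_congr
    intro t _
    dsimp only
    rw [dot_eq]
end

section
/- (Lemma 1, one hidden layer.) Let ‖·‖ be a norm on ℝⁿ with dual norm ‖v‖_* = sup over t with ‖t‖ ≤ 1 of |⟨t, v⟩|. Let A be a real p×n matrix, b, c ∈ ℝᵖ, and F(x) = Σⱼ cⱼ · ReLU((A x + b)ⱼ). Let Ω ⊆ ℝⁿ be convex and let L ∈ ℝ be such that for every x ∈ Ω and every u ∈ ℝᵖ with uⱼ ∈ G((A x + b)ⱼ) for all j, one has ‖Aᵀ diag(u) c‖_* ≤ L. Then for all x, y ∈ Ω, |F(y) - F(x)| ≤ L · ‖y - x‖, i.e., L is a Lipschitz constant for F on Ω with respect to ‖·‖. -/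
open Matrix

/-- The dual norm of a norm `N` on `ℝⁿ`:
`‖v‖_* = sup { |⟨t, v⟩| : N t ≤ 1 }`. -/
noncomputable def dualNorm (n : ℕ) (N : (Fin n → ℝ) → ℝ) (v : Fin n → ℝ) : ℝ :=
  sSup {r : ℝ | ∃ t : Fin n → ℝ, N t ≤ 1 ∧ r = |∑ i, t i * v i|}

/-! Along the segment `s ↦ x + s • (y - x)`, `F` is a sum of ReLUs of affine functions of `s`,
so it has a right derivative everywhere; it equals `⟪y - x, Aᵀ diag(u) c⟫` where `uⱼ` is the
right slope of the `j`-th ReLU, which lies in `G` at the current point. The dual norm bounds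
this by `L * N (y - x)`, and the mean value inequality for right derivatives concludes. -/

open Set

-- Type synonym carrying the norm `N` instead of any norm `E` may already have.
def NormedBy (E : Type*) (_N : E → ℝ) : Type _ := E

section NormAxioms

variable {E : Type*} [AddCommGroup E] [Module ℝ E] {N : E → ℝ}

instance : AddCommGroup (NormedBy E N) := inferInstanceAs (AddCommGroup E)

instance : Module ℝ (NormedBy E N) := inferInstanceAs (Module ℝ E)

instance [FiniteDimensional ℝ E] : FiniteDimensional ℝ (NormedBy E N) :=
  inferInstanceAs (FiniteDimensional ℝ E)

lemma map_zero_of_smul_eq (Nsmul : ∀ (r : ℝ) a, N (r • a) = |r| * N a) : N 0 = 0 := by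
  simpa using Nsmul 0 0

lemma map_neg_of_smul_eq (Nsmul : ∀ (r : ℝ) a, N (r • a) = |r| * N a) (a : E) :
    N (-a) = N a := by
  simpa using Nsmul (-1) a

lemma nonneg_of_add_le_of_smul_eq (Nadd : ∀ a b, N (a + b) ≤ N a + N b)
    (Nsmul : ∀ (r : ℝ) a, N (r • a) = |r| * N a) (a : E) : 0 ≤ N a := by
  have := Nadd a (-a)
  rw [add_neg_cancel, map_zero_of_smul_eq Nsmul, map_neg_of_smul_eq Nsmul] at this
  linarith

lemma exists_abs_le_mul_of_norm_axioms [FiniteDimensional ℝ E]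
    (Nadd : ∀ a b, N (a + b) ≤ N a + N b) (Nsmul : ∀ (r : ℝ) a, N (r • a) = |r| * N a)
    (Ndef : ∀ a, N a = 0 → a = 0) (f : E →ₗ[ℝ] ℝ) :
    ∃ C, ∀ t, |f t| ≤ C * N t := by
  let _ : NormedAddCommGroup (NormedBy E N) := AddGroupNorm.toNormedAddCommGroup
    { toFun := N
      map_zero' := map_zero_of_smul_eq Nsmul
      add_le' := Nadd
      neg' := map_neg_of_smul_eq Nsmul
      eq_zero_of_map_eq_zero' := Ndef }
  let _ : NormedSpace ℝ (NormedBy E N) := ⟨fun r a => (Nsmul r a).le⟩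
  let f' : NormedBy E N →L[ℝ] ℝ := LinearMap.toContinuousLinearMap f
  exact ⟨‖f'‖, f'.le_opNorm⟩

end NormAxioms

-- `dualNorm` is an `sSup`, which is junk unless the set is bounded above; boundedness is
-- where finite dimensionality enters.
lemma abs_dotProduct_le_dualNorm_mul {n : ℕ} {N : (Fin n → ℝ) → ℝ}
    (Nadd : ∀ a b, N (a + b) ≤ N a + N b) (Nsmul : ∀ (r : ℝ) a, N (r • a) = |r| * N a)
    (Ndef : ∀ a, N a = 0 → a = 0) (v w : Fin n → ℝ) :
    |w ⬝ᵥ v| ≤ dualNorm n N v * N w := by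
  obtain ⟨C, hC⟩ := exists_abs_le_mul_of_norm_axioms Nadd Nsmul Ndef (dotProductBilin ℝ ℝ v)
  have hbdd : BddAbove {r | ∃ t, N t ≤ 1 ∧ r = |∑ i, t i * v i|} := by
    refine ⟨max C 0, ?_⟩
    rintro _ ⟨t, ht, rfl⟩
    calc |t ⬝ᵥ v| ≤ C * N t := by simpa [dotProduct_comm] using hC t
      _ ≤ max C 0 * 1 := mul_le_mul (le_max_left C 0) ht
          (nonneg_of_add_le_of_smul_eq Nadd Nsmul t) (le_max_right C 0)
      _ = max C 0 := mul_one _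
  rcases (nonneg_of_add_le_of_smul_eq Nadd Nsmul w).eq_or_lt with hw | hw
  · simp [Ndef w hw.symm, map_zero_of_smul_eq Nsmul]
  · have hunit : N ((N w)⁻¹ • w) ≤ 1 := by
      rw [Nsmul, abs_of_pos (inv_pos.mpr hw), inv_mul_cancel₀ hw.ne']
    calc |w ⬝ᵥ v| = N w * |((N w)⁻¹ • w) ⬝ᵥ v| := by
          rw [smul_dotProduct, smul_eq_mul, abs_mul, abs_of_pos (inv_pos.mpr hw),
            mul_inv_cancel_left₀ hw.ne']
      _ ≤ N w * dualNorm n N v := by gcongr; exact le_csSup hbdd ⟨_, hunit, rfl⟩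
      _ = dualNorm n N v * N w := mul_comm _ _

@[fun_prop]
lemma continuous_ReLU : Continuous ReLU := continuous_const.max continuous_id

noncomputable def reluRightSlope (z d : ℝ) : ℝ := if 0 < z ∨ z = 0 ∧ 0 < d then 1 else 0

lemma reluRightSlope_mem_G (z d : ℝ) : reluRightSlope z d ∈ G z := by
  rcases lt_trichotomy z 0 with hz | rfl | hz
  · simp [reluRightSlope, G, hz, hz.not_gt, hz.ne]
  · by_cases hd : 0 < d <;> simp [reluRightSlope, G, hd]
  · simp [reluRightSlope, G, hz]

lemma hasDerivWithinAt_ReLU_affine (a d t : ℝ) :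
    HasDerivWithinAt (fun s => ReLU (a + s * d)) (reluRightSlope (a + t * d) d * d) (Ici t) t := by
  have hlin : HasDerivAt (fun s => a + s * d) d t := (hasDerivAt_mul_const d).const_add a
  rcases lt_trichotomy (a + t * d) 0 with hneg | hzero | hpos
  · have hloc : (fun s => ReLU (a + s * d)) =ᶠ[nhds t] fun _ => 0 := by
      filter_upwards [hlin.continuousAt.eventually_lt continuousAt_const hneg] with s hs
      exact max_eq_left hs.le
    simpa [reluRightSlope, hneg.not_gt, hneg.ne] using
      ((hasDerivAt_const t (0 : ℝ)).congr_of_eventuallyEq hloc).hasDerivWithinAt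
  · have hkink : ∀ s ∈ Ici t, ReLU (a + s * d) = (s - t) * max 0 d := fun s hs => by
      rw [mul_max_of_nonneg _ _ (sub_nonneg.mpr hs), mul_zero, ReLU]
      congr 1
      linarith
    have hslope : reluRightSlope (a + t * d) d * d = 1 * max 0 d := by
      rcases lt_or_ge 0 d with hd | hd
      · simp [reluRightSlope, hzero, hd, max_eq_right hd.le]
      · simp [reluRightSlope, hzero, hd.not_gt, max_eq_left hd]
    rw [hslope]
    exact (((hasDerivAt_id t).sub_const t).mul_const (max 0 d)).hasDerivWithinAt.congr hkink
      (by simpa using hkink t self_mem_Ici)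
  · have hloc : (fun s => ReLU (a + s * d)) =ᶠ[nhds t] fun s => a + s * d := by
      filter_upwards [continuousAt_const.eventually_lt hlin.continuousAt hpos] with s hs
      exact max_eq_right hs.le
    simpa [reluRightSlope, hpos] using (hlin.congr_of_eventuallyEq hloc).hasDerivWithinAt

lemma hasDerivWithinAt_sum_mul_ReLU_affine {ι : Type*} [Fintype ι] (c a d : ι → ℝ) (t : ℝ) :
    HasDerivWithinAt (fun s => ∑ j, c j * ReLU (a j + s * d j))
      (∑ j, c j * (reluRightSlope (a j + t * d j) (d j) * d j)) (Ici t) t :=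
  HasDerivWithinAt.fun_sum fun j _ => (hasDerivWithinAt_ReLU_affine _ _ _).const_mul (c j)

lemma sum_mul_mul_mulVec_eq_dotProduct {R m n : Type*} [CommSemiring R] [Fintype m]
    [Fintype n] [DecidableEq m] (A : Matrix m n R) (u c : m → R) (w : n → R) :
    ∑ j, c j * (u j * (A *ᵥ w) j) = w ⬝ᵥ (Aᵀ * diagonal u) *ᵥ c := by
  rw [← mulVec_mulVec, mulVec_transpose, dotProduct_comm, ← dotProduct_mulVec]
  simp only [dotProduct, mulVec_diagonal]
  exact Finset.sum_congr rfl fun j _ => by ring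

/-- Lemma 1, one hidden layer: if `‖Aᵀ diag(u) c‖_* ≤ L` for every `x ∈ Ω` and every
`u` with `uⱼ ∈ G((Ax+b)ⱼ)`, then `L` is a Lipschitz constant for
`F(x) = Σⱼ cⱼ ReLU((Ax+b)ⱼ)` on the convex set `Ω` w.r.t. the norm `N`. -/
theorem one_layer_lipschitz_bound (n p : ℕ)
    (N : (Fin n → ℝ) → ℝ)
    (Nadd : ∀ a b : Fin n → ℝ, N (a + b) ≤ N a + N b)
    (Nsmul : ∀ (r : ℝ) (a : Fin n → ℝ), N (r • a) = |r| * N a)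
    (Ndef : ∀ a : Fin n → ℝ, N a = 0 → a = 0)
    (A : Matrix (Fin p) (Fin n) ℝ) (b c : Fin p → ℝ)
    (F : (Fin n → ℝ) → ℝ)
    (hF : ∀ x, F x = ∑ j, c j * ReLU ((A.mulVec x + b) j))
    (Ω : Set (Fin n → ℝ)) (hΩ : Convex ℝ Ω) (L : ℝ)
    (hL : ∀ x ∈ Ω, ∀ u : Fin p → ℝ, (∀ j, u j ∈ G ((A.mulVec x + b) j)) →
      dualNorm n N ((Aᵀ * Matrix.diagonal u).mulVec c) ≤ L) :
    ∀ x ∈ Ω, ∀ y ∈ Ω, |F y - F x| ≤ L * N (y - x) := by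
  intro x hx y hy
  set a := A *ᵥ x + b
  set d := A *ᵥ (y - x)
  have hpre : ∀ (s : ℝ) j, (A *ᵥ (x + s • (y - x)) + b) j = a j + s * d j := fun s j => by
    simp only [a, d, mulVec_add, mulVec_smul, Pi.add_apply, Pi.smul_apply, smul_eq_mul]
    ring
  let g : ℝ → ℝ := fun s => ∑ j, c j * ReLU (a j + s * d j)
  have hFg : ∀ s : ℝ, F (x + s • (y - x)) = g s := fun s => by simp only [hF, hpre, g]
  let u : ℝ → Fin p → ℝ := fun t j => reluRightSlope (a j + t * d j) (d j)
  have hderiv : ∀ t, HasDerivWithinAt g ((y - x) ⬝ᵥ (Aᵀ * diagonal (u t)) *ᵥ c) (Ici t) t :=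
    fun t => by
      rw [← sum_mul_mul_mulVec_eq_dotProduct]
      exact hasDerivWithinAt_sum_mul_ReLU_affine c a d t
  have hbound : ∀ t ∈ Ico (0 : ℝ) 1,
      ‖(y - x) ⬝ᵥ (Aᵀ * diagonal (u t)) *ᵥ c‖ ≤ L * N (y - x) := fun t ht => by
    have hmem : x + t • (y - x) ∈ Ω := hΩ.add_smul_sub_mem hx hy ⟨ht.1, ht.2.le⟩
    have hG : ∀ j, u t j ∈ G ((A *ᵥ (x + t • (y - x)) + b) j) := fun j => by
      rw [hpre]
      exact reluRightSlope_mem_G _ _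
    calc ‖(y - x) ⬝ᵥ (Aᵀ * diagonal (u t)) *ᵥ c‖
        ≤ dualNorm n N ((Aᵀ * diagonal (u t)) *ᵥ c) * N (y - x) :=
          abs_dotProduct_le_dualNorm_mul Nadd Nsmul Ndef _ _
      _ ≤ L * N (y - x) := by
          gcongr
          exacts [nonneg_of_add_le_of_smul_eq Nadd Nsmul _, hL _ hmem _ hG]
  have hmvt := norm_image_sub_le_of_norm_deriv_right_le_segment (f := g)
    (by fun_prop) (fun t _ => hderiv t) hbound 1 (right_mem_Icc.mpr zero_le_one)
  simpa [← hFg, Real.norm_eq_abs] using hmvt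
end
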